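/- arXiv:2403.15255 — 2 statements merged into one kernel-verified Lean document; each statement's English description precedes it below -/
import Mathlib

section
/- In a locally compact Hausdorff étale groupoid G, if V ⊆ Iso(G) \ G^(0) is a nonempty open bisection, then the subgroupoid generated by V is an abelian subgroupoid of Iso(G), equal to the disjoint union over u ∈ r(V) of the cyclic subgroups of G(u) generated by the unique element of V ∩ G(u). -/
/-- A groupoid structure on a type `G`: range, source, a (partial, made total)
multiplication meaningful on composable pairs, and inversion. -/
structure GroupoidStruct (G : Type*) where
  r : G → G
  s : G → G
  mul : G → G → G
  inv : G → G
  r_mul : ∀ g h, s g = r h → r (mul g h) = r g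
  s_mul : ∀ g h, s g = r h → s (mul g h) = s h
  r_inv : ∀ g, r (inv g) = s g
  s_inv : ∀ g, s (inv g) = r g
  r_unit : ∀ g, mul (r g) g = g
  s_unit : ∀ g, mul g (s g) = g
  inv_mul : ∀ g, mul (inv g) g = s g
  mul_inv : ∀ g, mul g (inv g) = r g
  assoc : ∀ g h k, s g = r h → s h = r k → mul (mul g h) k = mul g (mul h k)

/-- A subset `H ⊆ G` is a subgroupoid if it is closed under inversion and under
multiplication of composable pairs. -/
def GroupoidStruct.IsSubgroupoid {G : Type*} (gs : GroupoidStruct G) (H : Set G) : Prop :=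
  (∀ g ∈ H, gs.inv g ∈ H) ∧
  (∀ g ∈ H, ∀ h ∈ H, gs.s g = gs.r h → gs.mul g h ∈ H)

/-- The unit space of a groupoid, viewed inside `G`. -/
def GroupoidStruct.unitSpace {G : Type*} (gs : GroupoidStruct G) : Set G :=
  {g | gs.r g = g}

/-- The isotropy bundle `Iso(G) = {g : r g = s g}`. -/
def GroupoidStruct.iso {G : Type*} (gs : GroupoidStruct G) : Set G :=
  {g | gs.r g = gs.s g}

/-- An abelian subgroupoid: a subgroupoid contained in the isotropy bundle in which
any two composable elements commute. -/
def GroupoidStruct.IsAbelianSubgroupoid {G : Type*} (gs : GroupoidStruct G)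
    (S : Set G) : Prop :=
  gs.IsSubgroupoid S ∧ S ⊆ gs.iso ∧
  ∀ g ∈ S, ∀ h ∈ S, gs.s g = gs.r h → gs.mul g h = gs.mul h g

/-- Natural powers of an isotropy element: `g⁰ = r g`, `gⁿ⁺¹ = gⁿ · g`. -/
def GroupoidStruct.gpowNat {G : Type*} (gs : GroupoidStruct G) (g : G) : ℕ → G
  | 0 => gs.r g
  | n + 1 => gs.mul (gs.gpowNat g n) g

/-- Integer powers of an isotropy element. -/
def GroupoidStruct.gzpow {G : Type*} (gs : GroupoidStruct G) (g : G) : ℤ → G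
  | Int.ofNat n => gs.gpowNat g n
  | Int.negSucc n => gs.inv (gs.gpowNat g (n + 1))

namespace GroupoidStruct

variable {G : Type*} (gs : GroupoidStruct G)

lemma r_r' (g : G) : gs.r (gs.r g) = gs.r g := by
  have h := gs.r_mul g (gs.inv g) (gs.r_inv g).symm
  rwa [gs.mul_inv] at h

lemma s_r' (g : G) : gs.s (gs.r g) = gs.r g := by
  have h := gs.s_mul g (gs.inv g) (gs.r_inv g).symm
  rwa [gs.mul_inv, gs.s_inv] at h

/-- The isotropy group at a unit `u`. -/
def isoGroup (u : G) (hru : gs.r u = u) (hsu : gs.s u = u) :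
    Group {g : G // gs.r g = u ∧ gs.s g = u} where
  mul a b := ⟨gs.mul a.1 b.1,
    (gs.r_mul a.1 b.1 (a.2.2.trans b.2.1.symm)).trans a.2.1,
    (gs.s_mul a.1 b.1 (a.2.2.trans b.2.1.symm)).trans b.2.2⟩
  one := ⟨u, hru, hsu⟩
  inv a := ⟨gs.inv a.1, (gs.r_inv a.1).trans a.2.2, (gs.s_inv a.1).trans a.2.1⟩
  mul_assoc a b c := Subtype.ext
    (gs.assoc a.1 b.1 c.1 (a.2.2.trans b.2.1.symm) (b.2.2.trans c.2.1.symm))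
  one_mul a := Subtype.ext (by
    show gs.mul u a.1 = a.1
    have h := gs.r_unit a.1; rwa [a.2.1] at h)
  mul_one a := Subtype.ext (by
    show gs.mul a.1 u = a.1
    have h := gs.s_unit a.1; rwa [a.2.2] at h)
  inv_mul_cancel a := Subtype.ext (by
    show gs.mul (gs.inv a.1) a.1 = u
    rw [gs.inv_mul]; exact a.2.2)

lemma isoGroup_pow_val (u : G) (hru : gs.r u = u) (hsu : gs.s u = u)
    (a : {g : G // gs.r g = u ∧ gs.s g = u}) (n : ℕ) :
    letI := gs.isoGroup u hru hsu
    (a ^ n).1 = gs.gpowNat a.1 n := by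
  letI := gs.isoGroup u hru hsu
  induction n with
  | zero => rw [pow_zero]; exact a.2.1.symm
  | succ n ih =>
    rw [pow_succ]
    show gs.mul (a ^ n).1 a.1 = _
    rw [ih]; rfl

lemma isoGroup_zpow_val (u : G) (hru : gs.r u = u) (hsu : gs.s u = u)
    (a : {g : G // gs.r g = u ∧ gs.s g = u}) (n : ℤ) :
    letI := gs.isoGroup u hru hsu
    (a ^ n).1 = gs.gzpow a.1 n := by
  letI := gs.isoGroup u hru hsu
  cases n with
  | ofNat n =>
    rw [Int.ofNat_eq_coe, zpow_natCast]
    exact gs.isoGroup_pow_val u hru hsu a n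
  | negSucc n =>
    rw [zpow_negSucc]
    show gs.inv ((a ^ (n + 1)).1) = _
    rw [gs.isoGroup_pow_val u hru hsu a (n + 1)]; rfl

end GroupoidStruct

/-- In a locally compact Hausdorff étale groupoid `G`, if `V ⊆ Iso(G) \ G⁽⁰⁾` is a
nonempty open bisection, then: each unit of `r(V)` carries a unique element of `V`;
the union `T` over `v ∈ V` of the cyclic subgroups generated by `v` is an abelian
subgroupoid of `Iso(G)` containing `V`; and `T` is the subgroupoid generated by `V`,
i.e. the smallest subgroupoid containing `V`. -/
theorem stmt5 {G : Type*} [TopologicalSpace G] [LocallyCompactSpace G] [T2Space G]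
    (gs : GroupoidStruct G)
    (hmul : Continuous fun p : { p : G × G // gs.s p.1 = gs.r p.2 } => gs.mul p.1.1 p.1.2)
    (hinv : Continuous gs.inv)
    (hr : IsLocalHomeomorph gs.r)
    (hs : IsLocalHomeomorph gs.s)
    (V : Set G) (hVne : V.Nonempty) (hVopen : IsOpen V)
    (hVsub : V ⊆ gs.iso \ gs.unitSpace)
    (hVbisec : Set.InjOn gs.r V ∧ Set.InjOn gs.s V) :
    (∀ u ∈ gs.r '' V, ∃! v, v ∈ V ∧ gs.r v = u) ∧
    gs.IsAbelianSubgroupoid {x | ∃ v ∈ V, ∃ n : ℤ, x = gs.gzpow v n} ∧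
    V ⊆ {x | ∃ v ∈ V, ∃ n : ℤ, x = gs.gzpow v n} ∧
    (∀ S : Set G, gs.IsSubgroupoid S → V ⊆ S →
      {x | ∃ v ∈ V, ∃ n : ℤ, x = gs.gzpow v n} ⊆ S) := by
  obtain ⟨hrinj, _⟩ := hVbisec
  have hiso : ∀ v ∈ V, gs.r v = gs.s v := fun v hv => (hVsub hv).1
  -- the element of the isotropy group at `r v` corresponding to `v`
  have key : ∀ v ∈ V, ∀ n : ℤ,
      gs.r (gs.gzpow v n) = gs.r v ∧ gs.s (gs.gzpow v n) = gs.r v := by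
    intro v hv n
    letI := gs.isoGroup (gs.r v) (gs.r_r' v) (gs.s_r' v)
    have h := gs.isoGroup_zpow_val (gs.r v) (gs.r_r' v) (gs.s_r' v)
      ⟨v, rfl, (hiso v hv).symm⟩ n
    rw [← h]
    exact ((⟨v, rfl, (hiso v hv).symm⟩ : {g : G // gs.r g = gs.r v ∧ gs.s g = gs.r v}) ^ n).2
  have hzpow : ∀ v ∈ V, ∀ m n : ℤ,
      gs.mul (gs.gzpow v m) (gs.gzpow v n) = gs.gzpow v (m + n) := by
    intro v hv m n
    letI := gs.isoGroup (gs.r v) (gs.r_r' v) (gs.s_r' v)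
    set a : {g : G // gs.r g = gs.r v ∧ gs.s g = gs.r v} := ⟨v, rfl, (hiso v hv).symm⟩
    have hm := gs.isoGroup_zpow_val (gs.r v) (gs.r_r' v) (gs.s_r' v) a m
    have hn := gs.isoGroup_zpow_val (gs.r v) (gs.r_r' v) (gs.s_r' v) a n
    have hmn := gs.isoGroup_zpow_val (gs.r v) (gs.r_r' v) (gs.s_r' v) a (m + n)
    rw [← hm, ← hn, ← hmn, zpow_add]
    rfl
  have hinvz : ∀ v ∈ V, ∀ n : ℤ, gs.inv (gs.gzpow v n) = gs.gzpow v (-n) := by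
    intro v hv n
    letI := gs.isoGroup (gs.r v) (gs.r_r' v) (gs.s_r' v)
    set a : {g : G // gs.r g = gs.r v ∧ gs.s g = gs.r v} := ⟨v, rfl, (hiso v hv).symm⟩
    have hn := gs.isoGroup_zpow_val (gs.r v) (gs.r_r' v) (gs.s_r' v) a n
    have hnn := gs.isoGroup_zpow_val (gs.r v) (gs.r_r' v) (gs.s_r' v) a (-n)
    rw [← hn, ← hnn, zpow_neg]
    rfl
  -- composable elements come from the same `v`
  have hsame : ∀ v ∈ V, ∀ w ∈ V, ∀ m n : ℤ,
      gs.s (gs.gzpow v m) = gs.r (gs.gzpow w n) → v = w := by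
    intro v hv w hw m n h
    rw [(key v hv m).2, (key w hw n).1] at h
    exact hrinj hv hw h
  refine ⟨?_, ⟨⟨?_, ?_⟩, ?_, ?_⟩, ?_, ?_⟩
  · rintro u ⟨v, hv, rfl⟩
    exact ⟨v, ⟨hv, rfl⟩, fun w ⟨hw, hrw⟩ => hrinj hw hv hrw⟩
  · rintro g ⟨v, hv, n, rfl⟩
    exact ⟨v, hv, -n, hinvz v hv n⟩
  · rintro g ⟨v, hv, m, rfl⟩ h ⟨w, hw, n, rfl⟩ hcomp
    obtain rfl := hsame v hv w hw m n hcomp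
    exact ⟨v, hv, m + n, hzpow v hv m n⟩
  · rintro g ⟨v, hv, n, rfl⟩
    exact ((key v hv n).1).trans ((key v hv n).2).symm
  · rintro g ⟨v, hv, m, rfl⟩ h ⟨w, hw, n, rfl⟩ hcomp
    obtain rfl := hsame v hv w hw m n hcomp
    rw [hzpow v hv m n, hzpow v hv n m, add_comm]
  · intro v hv
    refine ⟨v, hv, 1, ?_⟩
    show v = gs.mul (gs.r v) v
    exact (gs.r_unit v).symm
  · rintro S hS hVS x ⟨v, hv, n, rfl⟩
    have hnat : ∀ m : ℕ, gs.gpowNat v m ∈ S := by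
      intro m
      induction m with
      | zero =>
        show gs.r v ∈ S
        rw [← gs.mul_inv v]
        exact hS.2 v (hVS hv) (gs.inv v) (hS.1 v (hVS hv)) (gs.r_inv v).symm
      | succ m ih =>
        show gs.mul (gs.gpowNat v m) v ∈ S
        refine hS.2 _ ih v (hVS hv) ?_
        have := (key v hv (Int.ofNat m)).2
        exact this
    cases n with
    | ofNat m => exact hnat m
    | negSucc m => exact hS.1 _ (hnat (m + 1))
end

section
/- Let p,q be coprime, q > 0, c_{p/q} as above. The subgroup H = ℤ·(k,0) ⊕ ℤ·(m,n) of ℤ² with k,n > 0 is maximal among subgroups of ℤ² on which c_{p/q} is symmetric if and only if n·k = q. -/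
/-!
The commutator `c(x,y) / c(y,x)` is `exp(2πi (p/q) ω(x,y))` for the integral skew form
`ω(x,y) = x₂y₁ - x₁y₂`, so `c_{p/q}` is symmetric on a subgroup exactly when `q` divides `ω` on it.
On `H = ⟨(k,0),(m,n)⟩` the form `ω` takes the values `nk · ℤ`, so `H` is isotropic iff `q ∣ nk`.
If `nk = q`, anything pairing to `0 mod q` with both generators already lies in `H`. If `nk = qs`
with `s > 1`, a prime `r ∣ s` divides `k` or `n`, and dividing that entry by `r` gives a
strictly larger subgroup of index `nk/r`, still isotropic (when `r ∤ k`, `m` is adjusted by the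
Bézout relation between `r` and `k`).
-/

noncomputable def cθ (θ : ℝ) (x y : ℤ × ℤ) : Circle :=
  Circle.exp (2 * Real.pi * θ * (x.2 : ℝ) * (y.1 : ℝ))

def skewForm (x y : ℤ × ℤ) : ℤ := x.2 * y.1 - x.1 * y.2

def IsSymmOn (θ : ℝ) (K : AddSubgroup (ℤ × ℤ)) : Prop :=
  ∀ x ∈ K, ∀ y ∈ K, cθ θ x y = cθ θ y x

theorem cθ_comm_iff {p q : ℤ} (hq : q ≠ 0) (hcop : IsCoprime p q) (x y : ℤ × ℤ) :
    cθ ((p : ℝ) / q) x y = cθ ((p : ℝ) / q) y x ↔ q ∣ skewForm x y := by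
  have hq' : (q : ℝ) ≠ 0 := by exact_mod_cast hq
  have hexp : (∃ z : ℤ, 2 * Real.pi * (p / q) * x.2 * y.1
      = 2 * Real.pi * (p / q) * y.2 * x.1 + z * (2 * Real.pi)) ↔ q ∣ p * skewForm x y := by
    refine exists_congr fun z => ?_
    rw [skewForm, ← @Int.cast_inj ℝ]
    push_cast
    constructor <;> intro h
    · field_simp at h
      linear_combination h
    · field_simp
      linear_combination h
  rw [cθ, cθ, Circle.exp_eq_exp, hexp]
  exact ⟨hcop.symm.dvd_of_dvd_mul_left, fun h => h.mul_left p⟩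

section ClosurePair

variable {k m n : ℤ}

theorem mem_closure_pair_iff {x : ℤ × ℤ} :
    x ∈ AddSubgroup.closure {((k, 0) : ℤ × ℤ), (m, n)} ↔ ∃ a b : ℤ, x = (a * k + b * m, b * n) := by
  rw [AddSubgroup.mem_closure_pair]
  refine exists₂_congr fun a b => ?_
  simp [Prod.ext_iff, eq_comm]

theorem mul_dvd_skewForm_of_mem_closure_pair {x y : ℤ × ℤ}
    (hx : x ∈ AddSubgroup.closure {((k, 0) : ℤ × ℤ), (m, n)})
    (hy : y ∈ AddSubgroup.closure {((k, 0) : ℤ × ℤ), (m, n)}) :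
    n * k ∣ skewForm x y := by
  obtain ⟨a, b, rfl⟩ := mem_closure_pair_iff.1 hx
  obtain ⟨c, d, rfl⟩ := mem_closure_pair_iff.1 hy
  exact ⟨b * c - a * d, by simp only [skewForm]; ring⟩

theorem isSymmOn_closure_pair_iff {p q : ℤ} (hq : q ≠ 0) (hcop : IsCoprime p q) :
    IsSymmOn ((p : ℝ) / q) (AddSubgroup.closure {((k, 0) : ℤ × ℤ), (m, n)}) ↔ q ∣ n * k := by
  constructor
  · intro h
    have hgen := h (m, n) (AddSubgroup.subset_closure (by simp))
      (k, 0) (AddSubgroup.subset_closure (by simp))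
    simpa [cθ_comm_iff hq hcop, skewForm] using hgen
  · intro h x hx y hy
    exact (cθ_comm_iff hq hcop x y).2 (h.trans (mul_dvd_skewForm_of_mem_closure_pair hx hy))

theorem closure_pair_le_closure_pair_iff {k' m' n' : ℤ} (hn' : n' ≠ 0) :
    AddSubgroup.closure {((k, 0) : ℤ × ℤ), (m, n)} ≤
        AddSubgroup.closure {((k', 0) : ℤ × ℤ), (m', n')} ↔
      k' ∣ k ∧ n' ∣ n ∧ k' * n' ∣ m * n' - n * m' := by
  rw [AddSubgroup.closure_le, Set.insert_subset_iff, Set.singleton_subset_iff, SetLike.mem_coe,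
    SetLike.mem_coe, mem_closure_pair_iff, mem_closure_pair_iff]
  constructor
  · rintro ⟨⟨a, b, hkab⟩, c, d, hmn⟩
    simp only [Prod.ext_iff] at hkab hmn
    obtain rfl : b = 0 := by simpa [hn'] using hkab.2.symm
    refine ⟨⟨a, by simpa [mul_comm] using hkab.1⟩, ⟨d, by rw [hmn.2, mul_comm]⟩, ⟨c, ?_⟩⟩
    rw [hmn.1, hmn.2]
    ring
  · rintro ⟨⟨a, rfl⟩, ⟨d, rfl⟩, ⟨c, hc⟩⟩
    have hm : m = c * k' + d * m' := by
      apply mul_right_cancel₀ hn'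
      linear_combination hc
    exact ⟨⟨a, 0, by simp [mul_comm]⟩, c, d, by rw [hm, mul_comm n' d]⟩

theorem mem_closure_pair_of_dvd_skewForm (hk : k ≠ 0) (hn : n ≠ 0) {x : ℤ × ℤ}
    (h₁ : n * k ∣ skewForm (k, 0) x) (h₂ : n * k ∣ skewForm (m, n) x) :
    x ∈ AddSubgroup.closure {((k, 0) : ℤ × ℤ), (m, n)} := by
  obtain ⟨c, hc⟩ := h₁
  obtain ⟨d, hd⟩ := h₂
  simp only [skewForm] at hc hd
  have hx₂ : x.2 = -c * n := mul_left_cancel₀ hk (by linear_combination -hc)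
  have hx₁ : x.1 = d * k + -c * m := mul_left_cancel₀ hn (by linear_combination hd + m * hx₂)
  exact mem_closure_pair_iff.2 ⟨d, -c, Prod.ext hx₁ hx₂⟩

theorem Prime.not_mul_dvd_self {α : Type*} [CommMonoidWithZero α] [IsCancelMulZero α] {r a : α}
    (hr : Prime r) (ha : a ≠ 0) : ¬r * a ∣ a := fun h =>
  hr.not_dvd_one ((mul_dvd_mul_iff_right ha).1 (by rwa [one_mul]))

/-- Removing a prime factor `r` of the index `nk` from `k` or from `n` enlarges `H` strictly. -/
theorem exists_closure_pair_gt (hk : k ≠ 0) (hn : n ≠ 0) {r : ℤ} (hr : Prime r)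
    (hrnk : r ∣ n * k) : ∃ k' m' n', n' * k' * r = n * k ∧
      AddSubgroup.closure {((k, 0) : ℤ × ℤ), (m, n)} <
        AddSubgroup.closure {((k', 0) : ℤ × ℤ), (m', n')} := by
  by_cases hrk : r ∣ k
  · obtain ⟨k', rfl⟩ := hrk
    refine ⟨k', m, n, by ring, lt_iff_le_not_ge.2 ⟨?_, fun hle => ?_⟩⟩
    · exact (closure_pair_le_closure_pair_iff hn).2 ⟨dvd_mul_left _ _, dvd_rfl, 0, by ring⟩
    · exact hr.not_mul_dvd_self (right_ne_zero_of_mul hk)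
        ((closure_pair_le_closure_pair_iff hn).1 hle).1
  · obtain ⟨u, v, huv⟩ := hr.coprime_iff_not_dvd.2 hrk
    obtain ⟨n', rfl⟩ := (hr.dvd_or_dvd hrnk).resolve_right hrk
    have hn' : n' ≠ 0 := right_ne_zero_of_mul hn
    refine ⟨k, m * u, n', by ring, lt_iff_le_not_ge.2 ⟨?_, fun hle => ?_⟩⟩
    · refine (closure_pair_le_closure_pair_iff hn').2
        ⟨dvd_rfl, dvd_mul_left _ _, m * v, ?_⟩
      linear_combination -m * n' * huv
    · exact hr.not_mul_dvd_self hn' ((closure_pair_le_closure_pair_iff hn).1 hle).2.1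

variable {p q : ℤ} (hq : 0 < q) (hcop : IsCoprime p q) (hk : 0 < k) (hn : 0 < n)
include hq hcop hk hn

theorem maximal_isSymmOn_closure_pair_of_mul_eq (hnk : n * k = q) :
    Maximal (IsSymmOn ((p : ℝ) / q)) (AddSubgroup.closure {((k, 0) : ℤ × ℤ), (m, n)}) := by
  refine ⟨(isSymmOn_closure_pair_iff hq.ne' hcop).2 hnk.symm.dvd, fun K hK hHK x hx => ?_⟩
  have hpair (g : ℤ × ℤ) (hg : g ∈ ({(k, 0), (m, n)} : Set (ℤ × ℤ))) : n * k ∣ skewForm g x :=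
    hnk ▸ (cθ_comm_iff hq.ne' hcop g x).1 (hK g (hHK (AddSubgroup.subset_closure hg)) x hx)
  exact mem_closure_pair_of_dvd_skewForm hk.ne' hn.ne' (hpair _ (by simp)) (hpair _ (by simp))

theorem mul_eq_of_maximal_isSymmOn_closure_pair
    (hmax : Maximal (IsSymmOn ((p : ℝ) / q)) (AddSubgroup.closure {((k, 0) : ℤ × ℤ), (m, n)})) :
    n * k = q := by
  obtain ⟨s, hs⟩ := (isSymmOn_closure_pair_iff hq.ne' hcop).1 hmax.prop
  by_contra hne
  have hs₁ : s.natAbs ≠ 1 := by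
    have hs_pos : 0 < s := pos_of_mul_pos_right (hs ▸ mul_pos hn hk) hq.le
    have hs_ne : s ≠ 1 := by rintro rfl; exact hne (by rw [hs, mul_one])
    omega
  obtain ⟨r, hr, s', rfl⟩ := Int.exists_prime_and_dvd hs₁
  obtain ⟨k', m', n', hindex, hlt⟩ :=
    exists_closure_pair_gt (m := m) hk.ne' hn.ne' hr ⟨q * s', by rw [hs]; ring⟩
  have hsymm : q ∣ n' * k' :=
    ⟨s', mul_right_cancel₀ hr.ne_zero (by linear_combination hindex + hs)⟩
  exact hmax.not_gt ((isSymmOn_closure_pair_iff hq.ne' hcop).2 hsymm) hlt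

end ClosurePair

/-- For `p, q` coprime with `q > 0`, the subgroup `H = ℤ·(k,0) ⊕ ℤ·(m,n)` of `ℤ²`
with `k, n > 0` is maximal among subgroups of `ℤ²` on which `c_{p/q}` is symmetric
iff `n·k = q`. -/
theorem stmt13 (p q : ℤ) (hq : 0 < q) (hcop : IsCoprime p q)
    (k m n : ℤ) (hk : 0 < k) (hn : 0 < n) :
    ((∀ x ∈ AddSubgroup.closure {((k, 0) : ℤ × ℤ), (m, n)},
        ∀ y ∈ AddSubgroup.closure {((k, 0) : ℤ × ℤ), (m, n)},
          cθ ((p : ℝ) / (q : ℝ)) x y = cθ ((p : ℝ) / (q : ℝ)) y x) ∧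
      (∀ K : AddSubgroup (ℤ × ℤ),
        AddSubgroup.closure {((k, 0) : ℤ × ℤ), (m, n)} ≤ K →
        (∀ x ∈ K, ∀ y ∈ K, cθ ((p : ℝ) / (q : ℝ)) x y = cθ ((p : ℝ) / (q : ℝ)) y x) →
        K = AddSubgroup.closure {((k, 0) : ℤ × ℤ), (m, n)})) ↔ n * k = q := by
  have hmaximal :
      Maximal (IsSymmOn ((p : ℝ) / q)) (AddSubgroup.closure {((k, 0) : ℤ × ℤ), (m, n)}) ↔
        n * k = q :=
    ⟨mul_eq_of_maximal_isSymmOn_closure_pair hq hcop hk hn,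
      maximal_isSymmOn_closure_pair_of_mul_eq hq hcop hk hn⟩
  rw [← hmaximal, maximal_iff]
  exact and_congr_right fun _ => forall_congr' fun K =>
    ⟨fun h hle hK => (h hK hle).symm, fun h hK hle => (h hle hK).symm⟩
end
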